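/- If L₁ and L₂ are visibly pushdown languages over a common partition of the alphabet, then L₁ ∩ L₂ is a visibly pushdown language over that partition. -/
import Mathlib


inductive VKind | call | internal | response
deriving DecidableEq

/-- A (nondeterministic) visibly pushdown automaton over alphabet `A`
partitioned by `kind` into call, internal and response letters. -/
structure VPA (A : Type) (kind : A → VKind) where
  Q : Type
  Γ : Type
  [finQ : Fintype Q]
  [finΓ : Fintype Γ]
  init : Q
  accept : Set Q
  /-- transitions on call letters: push one symbol, do not inspect the stack -/
  δc : Q → A → Set (Q × Γ)
  /-- transitions on internal letters: do not inspect or modify the stack -/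
  δi : Q → A → Set Q
  /-- transitions on response letters: pop the topmost stack symbol -/
  δr : Q → A → Γ → Set Q
  /-- transitions on response letters read on the empty stack (bottom symbol) -/
  δb : Q → A → Set Q

namespace VPA

variable {A : Type} {kind : A → VKind}

inductive Steps (M : VPA A kind) : M.Q × List M.Γ → List A → M.Q × List M.Γ → Prop
  | nil (c) : Steps M c [] c
  | call {q s a q' γ w c} : kind a = .call → (q', γ) ∈ M.δc q a →
      Steps M (q', γ :: s) w c → Steps M (q, s) (a :: w) c
  | internal {q s a q' w c} : kind a = .internal → q' ∈ M.δi q a →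
      Steps M (q', s) w c → Steps M (q, s) (a :: w) c
  | pop {q γ s a q' w c} : kind a = .response → q' ∈ M.δr q a γ →
      Steps M (q', s) w c → Steps M (q, γ :: s) (a :: w) c
  | popEmpty {q a q' w c} : kind a = .response → q' ∈ M.δb q a →
      Steps M (q', []) w c → Steps M (q, []) (a :: w) c

/-- A VPA accepts a word if reading it from the initial state with empty stack
can end in an accepting state (with arbitrary stack contents). -/
def Accepts (M : VPA A kind) (w : List A) : Prop :=
  ∃ c : M.Q × List M.Γ, M.Steps (M.init, []) w c ∧ c.1 ∈ M.accept

end VPA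

/-- `L` is a visibly pushdown language over the partition `kind`. -/
def IsVPL {A : Type} (kind : A → VKind) (L : Set (List A)) : Prop :=
  ∃ M : VPA A kind, L = {w | M.Accepts w}

namespace VPA

variable {A : Type} {kind : A → VKind}

/-- Product automaton of two VPAs over the same partition. -/
def prod (M₁ M₂ : VPA A kind) : VPA A kind where
  Q := M₁.Q × M₂.Q
  Γ := M₁.Γ × M₂.Γ
  finQ := @instFintypeProd _ _ M₁.finQ M₂.finQ
  finΓ := @instFintypeProd _ _ M₁.finΓ M₂.finΓ
  init := (M₁.init, M₂.init)
  accept := {p | p.1 ∈ M₁.accept ∧ p.2 ∈ M₂.accept}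
  δc q a := {x | (x.1.1, x.2.1) ∈ M₁.δc q.1 a ∧ (x.1.2, x.2.2) ∈ M₂.δc q.2 a}
  δi q a := {p | p.1 ∈ M₁.δi q.1 a ∧ p.2 ∈ M₂.δi q.2 a}
  δr q a γ := {p | p.1 ∈ M₁.δr q.1 a γ.1 ∧ p.2 ∈ M₂.δr q.2 a γ.2}
  δb q a := {p | p.1 ∈ M₁.δb q.1 a ∧ p.2 ∈ M₂.δb q.2 a}

lemma Steps.fst {M₁ M₂ : VPA A kind} {w : List A}
    {c d : (M₁.prod M₂).Q × List (M₁.prod M₂).Γ}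
    (h : (M₁.prod M₂).Steps c w d) :
    M₁.Steps (c.1.1, c.2.map Prod.fst) w (d.1.1, d.2.map Prod.fst) := by
  induction h with
  | nil c => exact Steps.nil _
  | call hk hm _ ih => exact Steps.call hk hm.1 ih
  | internal hk hm _ ih => exact Steps.internal hk hm.1 ih
  | pop hk hm _ ih => exact Steps.pop hk hm.1 ih
  | popEmpty hk hm _ ih => exact Steps.popEmpty hk hm.1 ih

lemma Steps.snd {M₁ M₂ : VPA A kind} {w : List A}
    {c d : (M₁.prod M₂).Q × List (M₁.prod M₂).Γ}
    (h : (M₁.prod M₂).Steps c w d) :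
    M₂.Steps (c.1.2, c.2.map Prod.snd) w (d.1.2, d.2.map Prod.snd) := by
  induction h with
  | nil c => exact Steps.nil _
  | call hk hm _ ih => exact Steps.call hk hm.2 ih
  | internal hk hm _ ih => exact Steps.internal hk hm.2 ih
  | pop hk hm _ ih => exact Steps.pop hk hm.2 ih
  | popEmpty hk hm _ ih => exact Steps.popEmpty hk hm.2 ih

lemma steps_prod {M₁ M₂ : VPA A kind} {w : List A} {c₁ d₁ : M₁.Q × List M₁.Γ}
    (h₁ : M₁.Steps c₁ w d₁) :
    ∀ {c₂ d₂ : M₂.Q × List M₂.Γ}, M₂.Steps c₂ w d₂ → c₁.2.length = c₂.2.length →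
    (M₁.prod M₂).Steps ((c₁.1, c₂.1), c₁.2.zip c₂.2) w ((d₁.1, d₂.1), d₁.2.zip d₂.2) := by
  induction h₁ with
  | nil c =>
    intro c₂ d₂ h₂ hl
    cases h₂ with
    | nil => exact Steps.nil _
  | @call q s a q' γ w c hk hm _ ih =>
    intro c₂ d₂ h₂ hl
    cases h₂ with
    | call hk₂ hm₂ hs₂ =>
      exact Steps.call hk ⟨hm, hm₂⟩ (ih hs₂ (by simpa using hl))
    | internal hk₂ => rw [hk] at hk₂; cases hk₂
    | pop hk₂ => rw [hk] at hk₂; cases hk₂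
    | popEmpty hk₂ => rw [hk] at hk₂; cases hk₂
  | @internal q s a q' w c hk hm _ ih =>
    intro c₂ d₂ h₂ hl
    cases h₂ with
    | internal hk₂ hm₂ hs₂ =>
      have h := ih hs₂ hl
      exact Steps.internal hk ⟨hm, hm₂⟩ h
    | call hk₂ => rw [hk] at hk₂; cases hk₂
    | pop hk₂ => rw [hk] at hk₂; cases hk₂
    | popEmpty hk₂ => rw [hk] at hk₂; cases hk₂
  | @pop q γ s a q' w c hk hm _ ih =>
    intro c₂ d₂ h₂ hl
    cases h₂ with
    | pop hk₂ hm₂ hs₂ => exact Steps.pop hk ⟨hm, hm₂⟩ (ih hs₂ (by simpa using hl))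
    | popEmpty hk₂ => simp at hl
    | call hk₂ => rw [hk] at hk₂; cases hk₂
    | internal hk₂ => rw [hk] at hk₂; cases hk₂
  | @popEmpty q a q' w c hk hm _ ih =>
    intro c₂ d₂ h₂ hl
    cases h₂ with
    | popEmpty hk₂ hm₂ hs₂ => exact Steps.popEmpty hk ⟨hm, hm₂⟩ (ih hs₂ rfl)
    | pop hk₂ => simp at hl
    | call hk₂ => rw [hk] at hk₂; cases hk₂
    | internal hk₂ => rw [hk] at hk₂; cases hk₂

lemma accepts_prod {M₁ M₂ : VPA A kind} {w : List A} :
    (M₁.prod M₂).Accepts w ↔ M₁.Accepts w ∧ M₂.Accepts w := by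
  constructor
  · rintro ⟨⟨⟨p₁, p₂⟩, t⟩, hs, ha₁, ha₂⟩
    exact ⟨⟨(p₁, t.map Prod.fst), hs.fst, ha₁⟩, ⟨(p₂, t.map Prod.snd), hs.snd, ha₂⟩⟩
  · rintro ⟨⟨⟨p₁, t₁⟩, hs₁, ha₁⟩, ⟨⟨p₂, t₂⟩, hs₂, ha₂⟩⟩
    exact ⟨((p₁, p₂), t₁.zip t₂), steps_prod hs₁ hs₂ rfl, ha₁, ha₂⟩

end VPA

/-- VPLs over a common partition are closed under intersection. -/
theorem IsVPL.inter {A : Type} (kind : A → VKind) (L₁ L₂ : Set (List A))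
    (h₁ : IsVPL kind L₁) (h₂ : IsVPL kind L₂) : IsVPL kind (L₁ ∩ L₂) := by
  obtain ⟨M₁, rfl⟩ := h₁
  obtain ⟨M₂, rfl⟩ := h₂
  refine ⟨M₁.prod M₂, Set.ext fun w => ?_⟩
  simp only [Set.mem_inter_iff, Set.mem_setOf_eq, VPA.accepts_prod]
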